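/- Max pooling of a matrix column equals a normalized ReLU mean: let x₁,…,x_N be real numbers (N ≥ 2) with a uniquely attained maximum m, second-largest value n < m, and choose t with n ≤ t < m and c = (m − t)/(N·m) > 0 (assuming m > 0). Then max_j x_j = meanⱼ(ReLU((xⱼ − t)/c)) where mean is (1/N)·Σⱼ. -/
import Mathlib


theorem max_pool_eq_relu_mean (N : ℕ) (hN : 2 ≤ N) (x : Fin N → ℝ) (m n t c : ℝ)
    (hm_pos : 0 < m)
    (hm_le : ∀ j, x j ≤ m) (hm_unique : ∃! i₀ : Fin N, x i₀ = m)
    (hn : ∀ j, x j ≠ m → x j ≤ n) (hnm : n < m)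
    (hnt : n ≤ t) (htm : t < m)
    (hc : c = (m - t) / (N * m)) :
    m = ((1 : ℝ) / N) * ∑ j : Fin N, max ((x j - t) / c) 0 := by
  obtain ⟨i₀, hi₀, huniq⟩ := hm_unique
  have hNpos : (0 : ℝ) < N := by positivity
  have hcpos : 0 < c := by
    rw [hc]; apply div_pos (by linarith) (by positivity)
  have hsum : ∑ j : Fin N, max ((x j - t) / c) 0 = (m - t) / c := by
    rw [Finset.sum_eq_single i₀]
    · rw [hi₀, max_eq_left]
      exact div_nonneg (by linarith) hcpos.le
    · intro j _ hj
      have hne : x j ≠ m := fun h => hj (huniq j h)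
      have : x j ≤ t := le_trans (hn j hne) hnt
      rw [max_eq_right]
      exact div_nonpos_of_nonpos_of_nonneg (by linarith) hcpos.le
    · intro h; exact absurd (Finset.mem_univ i₀) h
  rw [hsum, hc]
  have hne : m - t ≠ 0 := by linarith
  have h2 : (m - t) / ((m - t) / (↑N * m)) = ↑N * m := by
    rw [div_div_eq_mul_div, mul_comm, mul_div_assoc, div_self hne, mul_one]
  rw [h2]
  field_simp
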